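/- Let X be a real random variable and B ∈ ℝ with P(X < B) = p ∈ (0,1]. Let q : ℝ → ℝ be bounded measurable with q(x) = 0 for x ≥ B treated as excluded, and define the standard estimator A = q(X)·1_{X<B} and the survival estimator A' = p·q(X') where X' is distributed as X conditioned on {X < B}. Then E[A'] = E[A] and, if q ≥ 0, Var(A') ≤ Var(A). -/

import Mathlib

open MeasureTheory ProbabilityTheory

theorem stmt_19 {Ω Ω' : Type*} [MeasurableSpace Ω] [MeasurableSpace Ω']
    (μ : Measure Ω) [IsProbabilityMeasure μ]
    (μ' : Measure Ω') [IsProbabilityMeasure μ']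
    (X : Ω → ℝ) (hX : Measurable X)
    (X' : Ω' → ℝ) (hX' : Measurable X')
    (B p : ℝ) (hp : p ∈ Set.Ioc (0 : ℝ) 1)
    (hPB : μ {ω | X ω < B} = ENNReal.ofReal p)
    (hcond : μ'.map X' = (μ[|{ω | X ω < B}]).map X)
    (q : ℝ → ℝ) (hq : Measurable q) (hqbdd : ∃ C, ∀ x, |q x| ≤ C)
    (A : Ω → ℝ) (hA : ∀ ω, A ω = if X ω < B then q (X ω) else 0)
    (A' : Ω' → ℝ) (hA' : ∀ ω', A' ω' = p * q (X' ω')) :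
    (∫ ω', A' ω' ∂μ' = ∫ ω, A ω ∂μ) ∧
      ((∀ x, 0 ≤ q x) → variance A' μ' ≤ variance A μ) := by
  obtain ⟨hp0, hp1⟩ := hp
  obtain ⟨C, hC⟩ := hqbdd
  have hC0 : 0 ≤ C := le_trans (abs_nonneg _) (hC 0)
  set S : Set Ω := {ω | X ω < B} with hS_def
  have hS : MeasurableSet S := measurableSet_lt hX measurable_const
  have hinv : ((μ S)⁻¹).toReal = p⁻¹ := by
    rw [hPB, ← ENNReal.ofReal_inv_of_pos hp0,
      ENNReal.toReal_ofReal (by positivity)]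
  have key : ∀ g : ℝ → ℝ, Measurable g →
      ∫ ω', g (X' ω') ∂μ' = p⁻¹ * ∫ ω in S, g (X ω) ∂μ := by
    intro g hg
    have h1 : ∫ ω', g (X' ω') ∂μ' = ∫ x, g x ∂(μ'.map X') :=
      (integral_map hX'.aemeasurable hg.aestronglyMeasurable).symm
    rw [h1, hcond, integral_map hX.aemeasurable hg.aestronglyMeasurable,
      ProbabilityTheory.cond, integral_smul_measure, hinv, smul_eq_mul]
  set I : ℝ := ∫ ω in S, q (X ω) ∂μ with hI_def
  set I2 : ℝ := ∫ ω in S, (q (X ω)) ^ 2 ∂μ with hI2_def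
  have hI2nonneg : 0 ≤ I2 := integral_nonneg fun ω => sq_nonneg _
  -- integrals of A
  have hAeq : A = S.indicator fun ω => q (X ω) := by
    funext ω
    rw [hA ω, Set.indicator_apply]
    rfl
  have hIA : ∫ ω, A ω ∂μ = I := by
    rw [hAeq, integral_indicator hS]
  have hA2eq : (fun ω => (A ω) ^ 2) = S.indicator fun ω => (q (X ω)) ^ 2 := by
    funext ω
    rw [hA ω]
    by_cases h : X ω < B <;> simp [Set.indicator_apply, hS_def, h]
  have hIA2 : ∫ ω, (A ω) ^ 2 ∂μ = I2 := by
    rw [hA2eq, integral_indicator hS]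
  -- integrals of A'
  have hIA' : ∫ ω', A' ω' ∂μ' = I := by
    have : ∫ ω', A' ω' ∂μ' = p * ∫ ω', q (X' ω') ∂μ' := by
      simp_rw [hA']; exact integral_const_mul p _
    rw [this, key q hq, ← mul_assoc, mul_inv_cancel₀ (ne_of_gt hp0), one_mul]
  have hIA'2 : ∫ ω', (A' ω') ^ 2 ∂μ' = p * I2 := by
    have h1 : ∫ ω', (A' ω') ^ 2 ∂μ' = p ^ 2 * ∫ ω', (q (X' ω')) ^ 2 ∂μ' := by
      simp_rw [hA', mul_pow]; exact integral_const_mul _ _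
    rw [h1, key (fun x => (q x) ^ 2) (hq.pow_const 2)]
    field_simp
    ring
  refine ⟨hIA'.trans hIA.symm, fun _ => ?_⟩
  -- Memℒp facts
  have hAm : Measurable A := by
    rw [hAeq]
    exact (hq.comp hX).indicator hS
  have hA'm : Measurable A' := by
    have : A' = fun ω' => p * q (X' ω') := funext hA'
    rw [this]
    exact (hq.comp hX').const_mul p
  have hAL2 : MemLp A 2 μ := by
    refine MemLp.of_bound hAm.aestronglyMeasurable C (Filter.Eventually.of_forall fun ω => ?_)
    rw [hA ω, Real.norm_eq_abs]
    by_cases h : X ω < B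
    · simp only [h, if_true]; exact hC _
    · simp [h, hC0]
  have hA'L2 : MemLp A' 2 μ' := by
    refine MemLp.of_bound hA'm.aestronglyMeasurable C (Filter.Eventually.of_forall fun ω' => ?_)
    rw [hA' ω', Real.norm_eq_abs, abs_mul, abs_of_pos hp0]
    calc p * |q (X' ω')| ≤ 1 * C := by
          exact mul_le_mul hp1 (hC _) (abs_nonneg _) zero_le_one
      _ = C := one_mul C
  rw [variance_eq_sub hA'L2, variance_eq_sub hAL2]
  have e1 : ∫ ω', (A' ^ 2) ω' ∂μ' = p * I2 := hIA'2
  have e2 : ∫ ω, (A ^ 2) ω ∂μ = I2 := hIA2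
  rw [e1, e2, hIA, hIA']
  have : p * I2 ≤ I2 := by nlinarith
  linarith
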